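/- Let G be a bipartite graph with parts A and B, each of size n, and minimum degree at least 1. Suppose G has no perfect matching. Then either (i) there exist two vertices of degree 1 in the same part sharing a common neighbour, or (ii) there exists a set S contained in A or in B with |S| ≥ 3, |N(S)| = |S| − 1, such that every vertex of N(S) has at least two neighbours in S and S ∪ N(S) induces a connected subgraph. -/
import Mathlib


/-- If a bipartite graph with parts `A`, `B` of size `n` and minimum degree at least one has
no perfect matching, then either two degree-one vertices in the same part share a common
neighbour, or some part contains a set `S` with `|S| ≥ 3`, `|N(S)| = |S| - 1`, every vertex
of `N(S)` having at least two neighbours in `S`, and `S ∪ N(S)` inducing a connected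
subgraph. -/
theorem stmt_9 {A B : Type*} [Fintype A] [Fintype B] (n : ℕ)
    (hA : Fintype.card A = n) (hB : Fintype.card B = n) (E : A → B → Prop)
    (hdegA : ∀ a, ∃ b, E a b) (hdegB : ∀ b, ∃ a, E a b)
    (hnoPM : ¬ ∃ f : A ≃ B, ∀ a, E a (f a)) :
    (∃ a₁ a₂ : A, a₁ ≠ a₂ ∧ {b | E a₁ b}.ncard = 1 ∧ {b | E a₂ b}.ncard = 1 ∧
      ∃ b, E a₁ b ∧ E a₂ b) ∨
    (∃ b₁ b₂ : B, b₁ ≠ b₂ ∧ {a | E a b₁}.ncard = 1 ∧ {a | E a b₂}.ncard = 1 ∧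
      ∃ a, E a b₁ ∧ E a b₂) ∨
    (∃ S : Set A, 3 ≤ S.ncard ∧ {b | ∃ a ∈ S, E a b}.ncard = S.ncard - 1 ∧
      (∀ b ∈ {b | ∃ a ∈ S, E a b}, 2 ≤ {a | a ∈ S ∧ E a b}.ncard) ∧
      ((SimpleGraph.fromRel
          (fun u v : A ⊕ B => ∃ a b, u = Sum.inl a ∧ v = Sum.inr b ∧ E a b)).induce
        (Sum.inl '' S ∪ Sum.inr '' {b | ∃ a ∈ S, E a b})).Connected) ∨
    (∃ T : Set B, 3 ≤ T.ncard ∧ {a | ∃ b ∈ T, E a b}.ncard = T.ncard - 1 ∧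
      (∀ a ∈ {a | ∃ b ∈ T, E a b}, 2 ≤ {b | b ∈ T ∧ E a b}.ncard) ∧
      ((SimpleGraph.fromRel
          (fun u v : A ⊕ B => ∃ a b, u = Sum.inl a ∧ v = Sum.inr b ∧ E a b)).induce
        (Sum.inl '' {a | ∃ b ∈ T, E a b} ∪ Sum.inr '' T)).Connected) := by
  classical
  set t : A → Finset B := fun a => Finset.univ.filter (fun b => E a b) with ht
  have htmem : ∀ a b, b ∈ t a ↔ E a b := by intro a b; simp [ht]
  -- Hall's condition must fail
  have hfail : ¬ ∀ u : Finset A, u.card ≤ (u.biUnion t).card := by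
    intro h
    obtain ⟨f, hfinj, hf⟩ := (Finset.all_card_le_biUnion_card_iff_exists_injective t).mp h
    have hbij : Function.Bijective f :=
      (Fintype.bijective_iff_injective_and_card f).mpr ⟨hfinj, hA.trans hB.symm⟩
    exact hnoPM ⟨Equiv.ofBijective f hbij, fun a => (htmem a (f a)).mp (hf a)⟩
  push_neg at hfail
  obtain ⟨s₀, hs₀⟩ := hfail
  -- take a violating set of minimal cardinality
  obtain ⟨s, hsmem, hsmin⟩ := Finset.exists_min_image
    (Finset.univ.filter (fun u : Finset A => (u.biUnion t).card < u.card)) Finset.card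
    ⟨s₀, by simpa using hs₀⟩
  simp only [Finset.mem_filter, Finset.mem_univ, true_and] at hsmem
  have hmin : ∀ u : Finset A, (u.biUnion t).card < u.card → s.card ≤ u.card := by
    intro u hu; exact hsmin u (by simpa using hu)
  have hgood : ∀ u : Finset A, u.card < s.card → u.card ≤ (u.biUnion t).card := by
    intro u hu; by_contra h; push_neg at h; exact absurd (hmin u h) (by omega)
  set ns : Finset B := s.biUnion t with hns
  have hspos : 1 ≤ s.card := by omega
  -- |N(S)| = |S| - 1
  have herase : ∀ a ∈ s, s.card - 1 ≤ ((s.erase a).biUnion t).card := by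
    intro a ha
    have h1 : (s.erase a).card = s.card - 1 := Finset.card_erase_of_mem ha
    have := hgood (s.erase a) (by omega)
    omega
  have hsubN : ∀ a ∈ s, (s.erase a).biUnion t ⊆ ns :=
    fun a ha => Finset.biUnion_subset_biUnion_of_subset_left t (Finset.erase_subset a s)
  have hcardN : ns.card = s.card - 1 := by
    obtain ⟨a, ha⟩ := Finset.card_pos.mp hspos
    have := herase a ha
    have := Finset.card_le_card (hsubN a ha)
    omega
  have heraseEq : ∀ a ∈ s, (s.erase a).biUnion t = ns := by
    intro a ha
    exact Finset.eq_of_subset_of_card_le (hsubN a ha) (by have := herase a ha; omega)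
  -- every vertex of ns has two neighbours in s (when |s| ≥ 2)
  have htwo : ∀ b ∈ ns, ∃ a₁ ∈ s, ∃ a₂ ∈ s, a₁ ≠ a₂ ∧ E a₁ b ∧ E a₂ b := by
    intro b hb
    obtain ⟨a₁, ha₁, hba₁⟩ := Finset.mem_biUnion.mp hb
    have hb' : b ∈ (s.erase a₁).biUnion t := (heraseEq a₁ ha₁) ▸ hb
    obtain ⟨a₂, ha₂, hba₂⟩ := Finset.mem_biUnion.mp hb'
    exact ⟨a₁, ha₁, a₂, Finset.mem_of_mem_erase ha₂,
      fun h => (Finset.ne_of_mem_erase ha₂) h.symm,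
      (htmem _ _).mp hba₁, (htmem _ _).mp hba₂⟩
  -- main case split
  rcases Nat.lt_or_ge s.card 3 with hlt | hge
  · -- |s| = 1 or 2
    interval_cases h : s.card
    · -- |s| = 1 : impossible
      exfalso
      obtain ⟨a, ha⟩ := Finset.card_eq_one.mp h
      obtain ⟨b, hb⟩ := hdegA a
      have : b ∈ ns := Finset.mem_biUnion.mpr ⟨a, by simp [ha], (htmem a b).mpr hb⟩
      have : 1 ≤ ns.card := Finset.card_pos.mpr ⟨b, this⟩
      omega
    · -- |s| = 2 : case (i)
      obtain ⟨a₁, a₂, hne, hs2⟩ := Finset.card_eq_two.mp h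
      have hns1 : ns.card = 1 := by omega
      obtain ⟨b, hb⟩ := Finset.card_eq_one.mp hns1
      have hsub : ∀ a ∈ s, {b' | E a b'} = {b} := by
        intro a ha
        have hsubb : {b' | E a b'} ⊆ {b} := by
          intro b' hb'
          have : b' ∈ ns := Finset.mem_biUnion.mpr ⟨a, ha, (htmem a b').mpr hb'⟩
          rw [hb] at this
          simpa using this
        obtain ⟨b₀, hb₀⟩ := hdegA a
        have : b₀ = b := hsubb hb₀
        exact subset_antisymm hsubb (by rintro x rfl; exact this ▸ hb₀)
      have hm1 : a₁ ∈ s := by simp [hs2]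
      have hm2 : a₂ ∈ s := by simp [hs2]
      have hE1 : E a₁ b := by have := hsub a₁ hm1; rw [Set.eq_singleton_iff_unique_mem] at this; exact this.1
      have hE2 : E a₂ b := by have := hsub a₂ hm2; rw [Set.eq_singleton_iff_unique_mem] at this; exact this.1
      exact Or.inl ⟨a₁, a₂, hne, by rw [hsub a₁ hm1]; simp, by rw [hsub a₂ hm2]; simp,
        b, hE1, hE2⟩
  · -- |s| ≥ 3 : case (iii)
    refine Or.inr (Or.inr (Or.inl ⟨(↑s : Set A), ?_⟩))
    have hNset : {b | ∃ a ∈ (↑s : Set A), E a b} = (↑ns : Set B) := by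
      ext b; simp [hns, htmem, Finset.mem_biUnion]
    rw [hNset, Set.ncard_coe_finset, Set.ncard_coe_finset]
    refine ⟨hge, hcardN, ?_, ?_⟩
    · -- two neighbours in S
      intro b hb
      have hb' : b ∈ ns := hb
      obtain ⟨a₁, ha₁, a₂, ha₂, hne, hE1, hE2⟩ := htwo b hb'
      have hset : {a | a ∈ (↑s : Set A) ∧ E a b} = ↑(s.filter (fun a => E a b)) := by
        ext a; simp
      rw [hset, Set.ncard_coe_finset]
      exact Finset.one_lt_card.mpr ⟨a₁, by simp [ha₁, hE1], a₂, by simp [ha₂, hE2], hne⟩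
    · -- connectedness
      set rel : A ⊕ B → A ⊕ B → Prop :=
        fun u v => ∃ a b, u = Sum.inl a ∧ v = Sum.inr b ∧ E a b with hrel
      set G := SimpleGraph.fromRel rel with hG
      set V' : Set (A ⊕ B) := Sum.inl '' (↑s : Set A) ∪ Sum.inr '' (↑ns : Set B) with hV'
      have hmemA : ∀ a : A, Sum.inl a ∈ V' ↔ a ∈ s := by intro a; simp [hV']
      have hmemB : ∀ b : B, (Sum.inr b : A ⊕ B) ∈ V' ↔ b ∈ ns := by intro b; simp [hV']
      have hadj : ∀ (a : A) (b : B) (ha : Sum.inl a ∈ V') (hb : (Sum.inr b : A ⊕ B) ∈ V'),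
          E a b → (G.induce V').Adj ⟨Sum.inl a, ha⟩ ⟨Sum.inr b, hb⟩ := by
        intro a b ha hb hE
        show G.Adj (Sum.inl a) (Sum.inr b)
        rw [hG, SimpleGraph.fromRel_adj]
        exact ⟨by simp, Or.inl ⟨a, b, rfl, rfl, hE⟩⟩
      obtain ⟨a₀, ha₀⟩ := Finset.card_pos.mp hspos
      have h₀ : Sum.inl a₀ ∈ V' := (hmemA a₀).mpr ha₀
      set P : A → Prop := fun a => ∃ h : Sum.inl a ∈ V',
        (G.induce V').Reachable ⟨Sum.inl a₀, h₀⟩ ⟨Sum.inl a, h⟩ with hP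
      set C : Finset A := s.filter P with hC
      have hCs : C ⊆ s := Finset.filter_subset _ _
      have ha₀C : a₀ ∈ C := by
        refine Finset.mem_filter.mpr ⟨ha₀, h₀, ?_⟩
        exact SimpleGraph.Reachable.refl _
      have hclose : ∀ a ∈ C, ∀ b, E a b → ∀ a' ∈ s, E a' b → a' ∈ C := by
        intro a haC b hEab a' ha' hEa'b
        obtain ⟨haS, h, hr⟩ := Finset.mem_filter.mp haC
        have hbmem : (Sum.inr b : A ⊕ B) ∈ V' :=
          (hmemB b).mpr (Finset.mem_biUnion.mpr ⟨a, haS, (htmem a b).mpr hEab⟩)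
        have ha'mem : Sum.inl a' ∈ V' := (hmemA a').mpr ha'
        refine Finset.mem_filter.mpr ⟨ha', ha'mem, ?_⟩
        exact hr.trans (((hadj a b h hbmem hEab).reachable).trans
          ((hadj a' b ha'mem hbmem hEa'b).reachable.symm))
      have hCeq : C = s := by
        by_contra hne
        have hssub : C ⊂ s := hCs.ssubset_of_ne hne
        set D : Finset A := s \ C with hD
        have hDcard : D.card = s.card - C.card := Finset.card_sdiff_of_subset hCs
        have hCcard : C.card < s.card := Finset.card_lt_card hssub
        have hDlt : D.card < s.card := by
          have : 1 ≤ C.card := Finset.card_pos.mpr ⟨a₀, ha₀C⟩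
          omega
        have hdisj : Disjoint (C.biUnion t) (D.biUnion t) := by
          rw [Finset.disjoint_left]
          intro b hbC hbD
          obtain ⟨a, haC, hba⟩ := Finset.mem_biUnion.mp hbC
          obtain ⟨a', ha'D, hba'⟩ := Finset.mem_biUnion.mp hbD
          have ha's : a' ∈ s := (Finset.mem_sdiff.mp ha'D).1
          have : a' ∈ C := hclose a haC b ((htmem a b).mp hba) a' ha's ((htmem a' b).mp hba')
          exact (Finset.mem_sdiff.mp ha'D).2 this
        have hsubN' : C.biUnion t ∪ D.biUnion t ⊆ ns := by
          apply Finset.union_subset <;>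
            exact Finset.biUnion_subset_biUnion_of_subset_left t
              (by intro x hx; first
                  | exact hCs hx
                  | exact (Finset.mem_sdiff.mp hx).1)
        have hcards : (C.biUnion t).card + (D.biUnion t).card ≤ ns.card := by
          rw [← Finset.card_union_of_disjoint hdisj]
          exact Finset.card_le_card hsubN'
        have h1 := hgood C hCcard
        have h2 := hgood D hDlt
        omega
      have hall : ∀ w : V', (G.induce V').Reachable ⟨Sum.inl a₀, h₀⟩ w := by
        rintro ⟨(a | b), hw⟩
        · have has : a ∈ s := (hmemA a).mp hw
          have : a ∈ C := hCeq ▸ has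
          obtain ⟨_, h, hr⟩ := Finset.mem_filter.mp this
          exact hr
        · have hbs : b ∈ ns := (hmemB b).mp hw
          obtain ⟨a, has, hba⟩ := Finset.mem_biUnion.mp hbs
          have haC : a ∈ C := hCeq ▸ has
          obtain ⟨_, h, hr⟩ := Finset.mem_filter.mp haC
          exact hr.trans (hadj a b h hw ((htmem a b).mp hba)).reachable
      haveI : Nonempty V' := ⟨⟨Sum.inl a₀, h₀⟩⟩
      exact ⟨fun u v => (hall u).symm.trans (hall v)⟩
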